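/- arXiv:1510.01093 — 5 statements merged into one kernel-verified Lean document; each statement's English description precedes it below -/
import Mathlib

section
/- Let n = qm with q ≥ 2, let A be an n×n complex matrix with blocks α (upper-left m×m), β (lower-right (n−m)×(n−m)), A_- (lower-left (n−m)×m). Let E_m denote the n×m matrix whose top m×m block is the identity and whose bottom block is zero. Then det(E_m | A·E_m | A²·E_m | … | A^{q−1}·E_m) = det(A_- | β·A_- | β²·A_- | … | β^{q−2}·A_-), where the left-hand side is the determinant of the n×n matrix obtained by concatenating the indicated n×m blocks, and the right-hand side is the determinant of the (n−m)×(n−m) matrix obtained by concatenating the indicated (n−m)×m blocks. -/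
/-- Horizontal concatenation of `q` blocks, each of size `N × m`, into an `N × (q*m)` matrix.
Block `s` occupies columns `s*m, …, s*m + (m-1)`. -/
def hcat {K : Type*} [CommRing K] (q m N : ℕ) (B : Fin q → Matrix (Fin N) (Fin m) K) :
    Matrix (Fin N) (Fin (q * m)) K := fun i j =>
  have hj := j.2
  have h0 : 0 < q * m := lt_of_le_of_lt (Nat.zero_le _) hj
  have hm : 0 < m := Nat.pos_of_ne_zero (by rintro rfl; simp at h0)
  B ⟨j.1 / m, (Nat.div_lt_iff_lt_mul hm).mpr hj⟩ i ⟨j.1 % m, Nat.mod_lt _ hm⟩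

/-- Horizontal concatenation of an `N × a` matrix and an `N × b` matrix. -/
def hcat2 {K : Type*} [CommRing K] (a b N : ℕ) (X : Matrix (Fin N) (Fin a) K)
    (Y : Matrix (Fin N) (Fin b) K) : Matrix (Fin N) (Fin (a + b)) K := fun i j =>
  if h : j.1 < a then X i ⟨j.1, h⟩ else Y i ⟨j.1 - a, by have := j.2; omega⟩

/-- The `n × m` matrix with the identity on top and zeros below. -/
def Em (K : Type*) [CommRing K] (n m : ℕ) : Matrix (Fin n) (Fin m) K :=
  fun i j => if (i : ℕ) = (j : ℕ) then 1 else 0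

/-- The lower-left `(n-m) × m` block of an `n × n` matrix. -/
def lowLeft {K : Type*} [CommRing K] {n m : ℕ} (hm : m ≤ n) (A : Matrix (Fin n) (Fin n) K) :
    Matrix (Fin (n - m)) (Fin m) K :=
  fun i j => A ⟨m + i.1, by have := i.2; omega⟩ ⟨j.1, by have := j.2; omega⟩

/-- The lower-right `(n-m) × (n-m)` block of an `n × n` matrix. -/
def lowRight {K : Type*} [CommRing K] {n m : ℕ} (hm : m ≤ n) (A : Matrix (Fin n) (Fin n) K) :
    Matrix (Fin (n - m)) (Fin (n - m)) K :=
  fun i j => A ⟨m + i.1, by have := i.2; omega⟩ ⟨m + j.1, by have := j.2; omega⟩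

namespace Krylov

variable {n m : ℕ}

/-- top `m×m` block of an `n×m` matrix. -/
def top (h : m ≤ n) (C : Matrix (Fin n) (Fin m) ℂ) : Matrix (Fin m) (Fin m) ℂ :=
  fun i j => C ⟨i, i.2.trans_le h⟩ j

noncomputable def Tm (h : m ≤ n) (A : Matrix (Fin n) (Fin n) ℂ) : ℕ → Matrix (Fin n) (Fin m) ℂ :=
  fun s => Nat.rec (Em ℂ n m) (fun _ T => A * T - Em ℂ n m * top h (A * T)) s

noncomputable def coef (h : m ≤ n) (A : Matrix (Fin n) (Fin n) ℂ) :
    ℕ → ℕ → Matrix (Fin m) (Fin m) ℂ := fun t s =>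
  Nat.rec (motive := fun _ => ℕ → Matrix (Fin m) (Fin m) ℂ)
    (fun t => if t = 0 then 1 else 0)
    (fun s ih t => match t with
      | 0 => - top h (A * Tm h A s)
      | t+1 => ih t) s t

variable (h : m ≤ n) (A : Matrix (Fin n) (Fin n) ℂ)

lemma Tm_zero : Tm h A 0 = Em ℂ n m := rfl
lemma Tm_succ (s : ℕ) :
    Tm h A (s+1) = A * Tm h A s - Em ℂ n m * top h (A * Tm h A s) := rfl
lemma coef_zero (t : ℕ) : coef h A t 0 = if t = 0 then 1 else 0 := rfl
lemma coef_zero_succ (s : ℕ) : coef h A 0 (s+1) = - top h (A * Tm h A s) := rfl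
lemma coef_succ_succ (t s : ℕ) : coef h A (t+1) (s+1) = coef h A t s := rfl

lemma coef_zero_of_lt : ∀ t s : ℕ, s < t → coef h A t s = 0
  | t+1, 0, _ => by simp [coef_zero]
  | t+1, s+1, hts => by rw [coef_succ_succ]; exact coef_zero_of_lt t s (by omega)

lemma coef_diag : ∀ s : ℕ, coef h A s s = 1
  | 0 => by simp [coef_zero]
  | s+1 => by rw [coef_succ_succ]; exact coef_diag s

lemma Tm_eq_sum : ∀ s : ℕ,
    Tm h A s = ∑ t ∈ Finset.range (s+1), A ^ t * Em ℂ n m * coef h A t s := by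
  intro s
  induction s with
  | zero => simp [Tm_zero, coef_zero]
  | succ s ih =>
    rw [Finset.sum_range_succ' _ (s+1)]
    have step : ∀ t ∈ Finset.range (s+1),
        A ^ (t+1) * Em ℂ n m * coef h A (t+1) (s+1)
          = A * (A ^ t * Em ℂ n m * coef h A t s) := by
      intro t _
      rw [coef_succ_succ, pow_succ']
      simp only [Matrix.mul_assoc]
    rw [Finset.sum_congr rfl step, ← Matrix.mul_sum, ← ih, Tm_succ, coef_zero_succ,
      pow_zero, Matrix.one_mul, Matrix.mul_neg]
    abel

lemma Tm_eq_sum' (s r : ℕ) (hr : s < r) :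
    Tm h A s = ∑ t ∈ Finset.range r, A ^ t * Em ℂ n m * coef h A t s := by
  rw [Tm_eq_sum]
  apply Finset.sum_subset
  · intro x hx; simp at hx ⊢; omega
  · intro x _ hx
    simp only [Finset.mem_range, not_lt] at hx
    rw [coef_zero_of_lt h A x s (by omega), Matrix.mul_zero]

lemma sum_split (f : Fin n → ℂ) :
    ∑ k, f k = (∑ k : Fin m, f ⟨k, k.2.trans_le h⟩) +
      ∑ k : Fin (n - m), f ⟨m + k, by have := k.2; omega⟩ := by
  have hn : m + (n - m) = n := by omega
  rw [← Fintype.sum_equiv (finCongr hn) (fun k => f (finCongr hn k)) f (fun _ => rfl)]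
  rw [← Fintype.sum_equiv (finSumFinEquiv (m := m) (n := n - m))
      (fun k => f (finCongr hn (finSumFinEquiv k))) _ (fun _ => rfl)]
  rw [Fintype.sum_sum_type]
  refine congrArg₂ (· + ·) (Finset.sum_congr rfl fun k _ => ?_)
    (Finset.sum_congr rfl fun k _ => ?_) <;> (congr 1)

lemma Em_mul_top (X : Matrix (Fin m) (Fin m) ℂ) (r : Fin n) (hr : r.1 < m) (j : Fin m) :
    (Em ℂ n m * X) r j = X ⟨r.1, hr⟩ j := by
  rw [Matrix.mul_apply]
  rw [Finset.sum_eq_single (⟨r.1, hr⟩ : Fin m)]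
  · simp [Em]
  · intro b _ hb
    have : (r.1 : ℕ) ≠ b.1 := fun hc => hb (by ext; simp [← hc])
    simp [Em, this]
  · simp

lemma Em_mul_bot (X : Matrix (Fin m) (Fin m) ℂ) (r : Fin n) (hr : m ≤ r.1)
    (j : Fin m) : (Em ℂ n m * X) r j = 0 := by
  rw [Matrix.mul_apply]
  apply Finset.sum_eq_zero
  intro k _
  have : (r.1 : ℕ) ≠ k.1 := by have := k.2; omega
  simp [Em, this]

lemma Tm_top_zero (s : ℕ) (i : Fin m) (j : Fin m) :
    Tm h A (s+1) ⟨i, i.2.trans_le h⟩ j = 0 := by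
  rw [Tm_succ]
  show (A * Tm h A s) _ j - (Em ℂ n m * top h (A * Tm h A s)) _ j = 0
  rw [Em_mul_top (top h (A * Tm h A s)) ⟨i.1, i.2.trans_le h⟩ i.2]
  show (A * Tm h A s) _ j - (A * Tm h A s) _ j = 0
  rw [sub_self]

lemma Tm_bot (s : ℕ) (i : Fin (n - m)) (hi : m + i.1 < n) (j : Fin m) :
    Tm h A (s+1) ⟨m + i.1, hi⟩ j = ((lowRight h A) ^ s * lowLeft h A) i j := by
  induction s generalizing i j with
  | zero =>
    rw [Tm_succ]
    show (A * Tm h A 0) _ j - (Em ℂ n m * top h (A * Tm h A 0)) _ j = _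
    rw [Em_mul_bot (top h (A * Tm h A 0)) ⟨m + i.1, hi⟩ (by simp), sub_zero, Matrix.mul_apply, sum_split h]
    have h1 : (∑ k : Fin m, A ⟨m + i.1, hi⟩ ⟨k, k.2.trans_le h⟩ *
        Tm h A 0 ⟨k, k.2.trans_le h⟩ j) = A ⟨m + i.1, hi⟩ ⟨j, j.2.trans_le h⟩ := by
      rw [Finset.sum_eq_single j]
      · simp [Tm_zero, Em]
      · intro b _ hb
        simp [Tm_zero, Em, Fin.val_ne_of_ne hb]
      · simp
    have h2 : (∑ k : Fin (n-m), A ⟨m + i.1, hi⟩ ⟨m + k.1, by have := k.2; omega⟩ *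
        Tm h A 0 ⟨m + k.1, by have := k.2; omega⟩ j) = 0 := by
      apply Finset.sum_eq_zero
      intro k _
      have : (m + k.1 : ℕ) ≠ (j : ℕ) := by have := j.2; omega
      simp [Tm_zero, Em, this]
    rw [h1, h2, add_zero, pow_zero, Matrix.one_mul]
    rfl
  | succ s ih =>
    rw [Tm_succ]
    show (A * Tm h A (s+1)) _ j - (Em ℂ n m * top h (A * Tm h A (s+1))) _ j = _
    rw [Em_mul_bot (top h (A * Tm h A (s+1))) ⟨m + i.1, hi⟩ (by simp), sub_zero, Matrix.mul_apply, sum_split h]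
    have h1 : (∑ k : Fin m, A ⟨m + i.1, hi⟩ ⟨k, k.2.trans_le h⟩ *
        Tm h A (s+1) ⟨k, k.2.trans_le h⟩ j) = 0 := by
      apply Finset.sum_eq_zero
      intro k _
      rw [Tm_top_zero h A s k j, mul_zero]
    rw [h1, zero_add]
    have h2 : ∀ k : Fin (n - m), A ⟨m + i.1, hi⟩ ⟨m + k.1, by have := k.2; omega⟩ *
        Tm h A (s+1) ⟨m + k.1, by have := k.2; omega⟩ j
        = lowRight h A i k * ((lowRight h A) ^ s * lowLeft h A) k j := by
      intro k
      rw [ih]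
      rfl
    rw [Finset.sum_congr rfl (fun k _ => h2 k)]
    rw [pow_succ', Matrix.mul_assoc, ← Matrix.mul_apply]


noncomputable def Umat (hm : 0 < m) (h : m ≤ n) (A : Matrix (Fin n) (Fin n) ℂ) :
    Matrix (Fin n) (Fin n) ℂ := fun r c =>
  coef h A (r.1 / m) (c.1 / m) ⟨r.1 % m, Nat.mod_lt _ hm⟩ ⟨c.1 % m, Nat.mod_lt _ hm⟩

lemma det_Umat (hm : 0 < m) (h : m ≤ n) (A : Matrix (Fin n) (Fin n) ℂ) :
    (Umat hm h A).det = 1 := by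
  have htri : (Umat hm h A).BlockTriangular id := by
    intro i j hij
    simp only [id_eq] at hij
    unfold Umat
    rcases lt_or_eq_of_le (Nat.div_le_div_right (le_of_lt hij) (c := m)) with hd | hd
    · rw [coef_zero_of_lt h A _ _ hd]; rfl
    · rw [hd, coef_diag]
      have h1 := Nat.div_add_mod i.1 m
      have h2 := Nat.div_add_mod j.1 m
      have hij' : (j.1 : ℕ) < i.1 := hij
      have h3 : m * (j.1 / m) = m * (i.1 / m) := by rw [hd]
      have hne : (i.1 % m) ≠ (j.1 % m) := by omega
      exact Matrix.one_apply_ne (fun hc => hne (congrArg Fin.val hc))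
  rw [Matrix.det_of_upperTriangular htri]
  apply Finset.prod_eq_one
  intro i _
  unfold Umat
  rw [coef_diag]
  exact Matrix.one_apply_eq _

def splitEquiv (h : m ≤ n) : Fin n ≃ Fin m ⊕ Fin (n - m) where
  toFun r := if hr : r.1 < m then .inl ⟨r.1, hr⟩ else .inr ⟨r.1 - m, by have := r.2; omega⟩
  invFun x := x.elim (fun i => ⟨i.1, i.2.trans_le h⟩) (fun i => ⟨m + i.1, by have := i.2; omega⟩)
  left_inv r := by
    by_cases hr : r.1 < m
    · simp [hr]
    · simp only [hr, dif_neg, not_false_iff, Sum.elim_inr]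
      ext; simp; omega
  right_inv x := by
    rcases x with i | i
    · simp [i.2]
    · have : ¬ (m + i.1 < m) := by omega
      simp [this]

lemma sum_blocks {q : ℕ} (hm : 0 < m) (f : Fin (q * m) → ℂ) :
    ∑ k, f k = ∑ t : Fin q, ∑ i : Fin m, f (finProdFinEquiv (t, i)) := by
  rw [← Fintype.sum_equiv (finProdFinEquiv (m := q) (n := m))
    (fun p => f (finProdFinEquiv p)) f (fun _ => rfl)]
  rw [Fintype.sum_prod_type]

lemma mul_Umat {q : ℕ} (hm : 0 < m) (h : m ≤ q * m)
    (A : Matrix (Fin (q * m)) (Fin (q * m)) ℂ) (r c : Fin (q * m)) :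
    ((hcat q m (q * m) (fun s => A ^ (s : ℕ) * Em ℂ (q * m) m)) * Umat hm h A) r c
      = Tm h A (c.1 / m) r ⟨c.1 % m, Nat.mod_lt _ hm⟩ := by
  rw [Matrix.mul_apply, sum_blocks hm]
  have inner : ∀ t : Fin q,
      (∑ i : Fin m, hcat q m (q * m) (fun s => A ^ (s : ℕ) * Em ℂ (q * m) m) r
          (finProdFinEquiv (t, i)) * Umat hm h A (finProdFinEquiv (t, i)) c)
      = (A ^ (t : ℕ) * Em ℂ (q * m) m * coef h A t.1 (c.1 / m)) r
          ⟨c.1 % m, Nat.mod_lt _ hm⟩ := by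
    intro t
    rw [Matrix.mul_apply]
    apply Finset.sum_congr rfl
    intro i _
    have hval : ((finProdFinEquiv (t, i) : Fin (q * m)) : ℕ) = i.1 + m * t.1 := rfl
    have hdiv : ((finProdFinEquiv (t, i) : Fin (q * m)) : ℕ) / m = t.1 := by
      rw [hval, Nat.add_mul_div_left _ _ hm, Nat.div_eq_of_lt i.2, Nat.zero_add]
    have hmod : ((finProdFinEquiv (t, i) : Fin (q * m)) : ℕ) % m = i.1 := by
      rw [hval, Nat.add_mul_mod_self_left, Nat.mod_eq_of_lt i.2]
    simp only [hcat, Umat, hdiv, hmod, Fin.eta]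
  rw [Finset.sum_congr rfl (fun t _ => inner t)]
  rw [Fin.sum_univ_eq_sum_range
    (fun t => (A ^ t * Em ℂ (q * m) m * coef h A t (c.1 / m)) r ⟨c.1 % m, Nat.mod_lt _ hm⟩) q]
  rw [← Matrix.sum_apply, ← Tm_eq_sum' h A (c.1 / m) q ((Nat.div_lt_iff_lt_mul hm).mpr c.2)]

end Krylov


theorem stmt_1 (m q : ℕ) (hm : 0 < m) (hq : 2 ≤ q)
    (A : Matrix (Fin (q * m)) (Fin (q * m)) ℂ) :
    (hcat q m (q * m) (fun s => A ^ (s : ℕ) * Em ℂ (q * m) m)).det =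
      ((hcat (q - 1) m (q * m - m)
          (fun s => (lowRight (Nat.le_mul_of_pos_left m (by omega)) A) ^ (s : ℕ) *
            lowLeft (Nat.le_mul_of_pos_left m (by omega)) A)).submatrix id
        (finCongr (by rw [Nat.sub_mul, one_mul]))).det := by
  have h : m ≤ q * m := Nat.le_mul_of_pos_left m (by omega)
  set N' := ((hcat (q - 1) m (q * m - m)
          (fun s => (lowRight (Nat.le_mul_of_pos_left m (by omega)) A) ^ (s : ℕ) *
            lowLeft (Nat.le_mul_of_pos_left m (by omega)) A)).submatrix id
        (finCongr (by rw [Nat.sub_mul, one_mul]))) with hN'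
  set e : Fin (q * m) ≃ Fin m ⊕ Fin (q * m - m) := Krylov.splitEquiv h h with he
  have hMU : (hcat q m (q * m) (fun s => A ^ (s : ℕ) * Em ℂ (q * m) m)) * Krylov.Umat hm h A
      = (Matrix.fromBlocks 1 0 0 N').submatrix e e := by
    ext r c
    rw [Krylov.mul_Umat hm h A r c, Matrix.submatrix_apply]
    by_cases hc : c.1 < m
    · have hdiv : c.1 / m = 0 := Nat.div_eq_of_lt hc
      have hmod : c.1 % m = c.1 := Nat.mod_eq_of_lt hc
      have hec : e c = Sum.inl ⟨c.1, hc⟩ := by simp [he, Krylov.splitEquiv, hc]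
      rw [hdiv, hec]
      by_cases hr : r.1 < m
      · have her : e r = Sum.inl ⟨r.1, hr⟩ := by simp [he, Krylov.splitEquiv, hr]
        rw [her, Matrix.fromBlocks_apply₁₁]
        show Em ℂ (q * m) m r ⟨c.1 % m, _⟩ = _
        rw [Matrix.one_apply]
        simp only [Em, hmod, Fin.ext_iff]
      · have her : e r = Sum.inr ⟨r.1 - m, by have := r.2; omega⟩ := by
          simp [he, Krylov.splitEquiv, hr]
        rw [her, Matrix.fromBlocks_apply₂₁]
        show Em ℂ (q * m) m r ⟨c.1 % m, _⟩ = _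
        have hne : (r.1 : ℕ) ≠ c.1 % m := by have := Nat.mod_lt c.1 hm; omega
        simp [Em, hne]
    · have hc' : m ≤ c.1 := le_of_not_gt hc
      have hpos : 0 < c.1 / m := Nat.div_pos hc' hm
      have hcc : c.1 = m + (c.1 - m) := by omega
      have hdiv : c.1 / m = (c.1 - m) / m + 1 := by
        conv_lhs => rw [hcc]
        rw [Nat.add_div_left _ hm]
      have hmod : c.1 % m = (c.1 - m) % m := by
        conv_lhs => rw [hcc]
        rw [Nat.add_mod_left]
      have hec : e c = Sum.inr ⟨c.1 - m, by have := c.2; omega⟩ := by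
        simp [he, Krylov.splitEquiv, hc]
      rw [hec, hdiv]
      by_cases hr : r.1 < m
      · have her : e r = Sum.inl ⟨r.1, hr⟩ := by simp [he, Krylov.splitEquiv, hr]
        rw [her, Matrix.fromBlocks_apply₁₂, Matrix.zero_apply]
        exact Krylov.Tm_top_zero h A ((c.1 - m) / m) ⟨r.1, hr⟩ ⟨c.1 % m, Nat.mod_lt _ hm⟩
      · have her : e r = Sum.inr ⟨r.1 - m, by have := r.2; omega⟩ := by
          simp [he, Krylov.splitEquiv, hr]
        rw [her, Matrix.fromBlocks_apply₂₂]
        have hrow : r = (⟨m + (r.1 - m), by have := r.2; omega⟩ : Fin (q * m)) := by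
          ext; simp; omega
        conv_lhs => rw [hrow]
        rw [Krylov.Tm_bot h A ((c.1 - m) / m)
          ⟨r.1 - m, by have := r.2; omega⟩ (by have := r.2; omega) ⟨c.1 % m, Nat.mod_lt _ hm⟩]
        rw [hN']
        simp only [Matrix.submatrix_apply, hcat, finCongr_apply, Fin.coe_cast, id_eq, hmod]
  rw [← mul_one (hcat q m (q * m) (fun s => A ^ (s : ℕ) * Em ℂ (q * m) m)).det,
    ← Krylov.det_Umat hm h A, ← Matrix.det_mul, hMU,
    Matrix.det_submatrix_equiv_self, Matrix.det_fromBlocks_zero₂₁, Matrix.det_one, one_mul]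
end

section
/- Let β be an N×N matrix over a field, U an N×m matrix, d ≥ 1 with dm = N, and c a scalar. Then det(U | (β+cI)U | (β+cI)²U | … | (β+cI)^{d−1}U) = det(U | βU | β²U | … | β^{d−1}U). -/
lemma pow_add_smul_one {K : Type*} [Field K] {n : ℕ} (β : Matrix (Fin n) (Fin n) K) (c : K) (s : ℕ) :
    (β + c • (1 : Matrix (Fin n) (Fin n) K)) ^ s
      = ∑ t ∈ Finset.range (s + 1), ((s.choose t : K) * c ^ (s - t)) • β ^ t := by
  have hc : Commute β (c • (1 : Matrix (Fin n) (Fin n) K)) :=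
    (Commute.one_right β).smul_right c
  rw [hc.add_pow]
  refine Finset.sum_congr rfl fun t ht => ?_
  simp only [smul_pow, one_pow, smul_smul, mul_smul_comm, smul_mul_assoc, mul_one]
  rw [← nsmul_eq_mul', ← Nat.cast_smul_eq_nsmul K (s.choose t) (β ^ t), smul_smul, mul_comm]

theorem stmt_2 {K : Type*} [Field K] (d m : ℕ) (hm : 0 < m) (hd : 1 ≤ d)
    (β : Matrix (Fin (d * m)) (Fin (d * m)) K) (U : Matrix (Fin (d * m)) (Fin m) K) (c : K) :
    (hcat d m (d * m)
        (fun s => (β + c • (1 : Matrix (Fin (d * m)) (Fin (d * m)) K)) ^ (s : ℕ) * U)).det =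
      (hcat d m (d * m) (fun s => β ^ (s : ℕ) * U)).det := by
  set T : Matrix (Fin (d * m)) (Fin (d * m)) K := fun i j =>
    if i.1 % m = j.1 % m then ((j.1 / m).choose (i.1 / m) : K) * c ^ (j.1 / m - i.1 / m)
    else 0 with hT
  have hTtri : T.BlockTriangular id := by
    intro i j hij
    simp only [id] at hij
    have hij' : j.1 < i.1 := hij
    simp only [hT]
    by_cases h : i.1 % m = j.1 % m
    · rw [if_pos h]
      have hle : j.1 / m ≤ i.1 / m := Nat.div_le_div_right hij'.le
      rcases hle.lt_or_eq with h' | h'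
      · rw [Nat.choose_eq_zero_of_lt h', Nat.cast_zero, zero_mul]
      · exfalso
        have heq : i.1 = j.1 := by
          conv_lhs => rw [← Nat.div_add_mod i.1 m]
          conv_rhs => rw [← Nat.div_add_mod j.1 m]
          rw [h, h']
        omega
    · rw [if_neg h]
  have hTdet : T.det = 1 := by
    rw [Matrix.det_of_upperTriangular hTtri]
    exact Finset.prod_eq_one fun i _ => by simp [hT]
  have key : hcat d m (d * m)
        (fun s => (β + c • (1 : Matrix (Fin (d * m)) (Fin (d * m)) K)) ^ (s : ℕ) * U)
      = hcat d m (d * m) (fun s => β ^ (s : ℕ) * U) * T := by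
    funext i j
    have hjm : j.1 / m < d := (Nat.div_lt_iff_lt_mul hm).mpr j.2
    set jr : Fin m := ⟨j.1 % m, Nat.mod_lt _ hm⟩ with hjr
    rw [Matrix.mul_apply]
    rw [← Fintype.sum_equiv (finProdFinEquiv : Fin d × Fin m ≃ Fin (d * m))
        (fun p => hcat d m (d * m) (fun s => β ^ (s : ℕ) * U) i (finProdFinEquiv p)
          * T (finProdFinEquiv p) j)
        (fun k => hcat d m (d * m) (fun s => β ^ (s : ℕ) * U) i k * T k j) (fun p => rfl)]
    rw [Fintype.sum_prod_type]
    have hval : ∀ (t : Fin d) (r : Fin m),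
        ((finProdFinEquiv (t, r) : Fin (d * m)) : ℕ) = r.1 + m * t.1 := fun t r => rfl
    have hdiv : ∀ (t : Fin d) (r : Fin m), (r.1 + m * t.1) / m = t.1 := fun t r => by
      rw [Nat.add_mul_div_left _ _ hm, Nat.div_eq_of_lt r.2, Nat.zero_add]
    have hmod : ∀ (t : Fin d) (r : Fin m), (r.1 + m * t.1) % m = r.1 := fun t r => by
      rw [Nat.add_mul_mod_self_left, Nat.mod_eq_of_lt r.2]
    have step : ∀ t : Fin d, (∑ r : Fin m,
        hcat d m (d * m) (fun s => β ^ (s : ℕ) * U) i (finProdFinEquiv (t, r))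
          * T (finProdFinEquiv (t, r)) j)
        = ((j.1 / m).choose t.1 : K) * c ^ (j.1 / m - t.1) * (β ^ (t : ℕ) * U) i jr := by
      intro t
      have h1 : ∀ r : Fin m,
          hcat d m (d * m) (fun s => β ^ (s : ℕ) * U) i (finProdFinEquiv (t, r))
            * T (finProdFinEquiv (t, r)) j
          = if r = jr then
              ((j.1 / m).choose t.1 : K) * c ^ (j.1 / m - t.1) * (β ^ (t : ℕ) * U) i r
            else 0 := by
        intro r
        simp only [hcat, hT, hval, hdiv, hmod]
        by_cases h : r = jr
        · have h' : r.1 = j.1 % m := by rw [h]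
          rw [if_pos h, if_pos h']
          simp only [Fin.eta]
          ring
        · have h' : ¬ r.1 = j.1 % m := fun hc => h (Fin.ext hc)
          rw [if_neg h', if_neg h, mul_zero]
      rw [Finset.sum_congr rfl (fun r _ => h1 r), Finset.sum_ite_eq' Finset.univ jr
        (fun r => ((j.1 / m).choose t.1 : K) * c ^ (j.1 / m - t.1) * (β ^ (t : ℕ) * U) i r),
        if_pos (Finset.mem_univ jr)]
    rw [Finset.sum_congr rfl (fun t _ => step t)]
    -- now compute the LHS entry via the binomial expansion
    show ((β + c • (1 : Matrix (Fin (d * m)) (Fin (d * m)) K)) ^ (j.1 / m) * U) i jr = _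
    rw [pow_add_smul_one, Matrix.sum_mul, Matrix.sum_apply]
    simp only [Matrix.smul_mul, Matrix.smul_apply, smul_eq_mul]
    rw [Fin.sum_univ_eq_sum_range
        (fun t => ((j.1 / m).choose t : K) * c ^ (j.1 / m - t) * ((β ^ t * U) i jr)) d]
    refine Finset.sum_subset (Finset.range_subset_range.mpr hjm) fun t _ ht => ?_
    have : j.1 / m < t := by simpa using ht
    rw [Nat.choose_eq_zero_of_lt this, Nat.cast_zero, zero_mul, zero_mul]
  rw [key, Matrix.det_mul, hTdet, mul_one]
end

section
/- Let n = qm with q ≥ 2 and define F(A) = det(E_m | A·E_m | … | A^{q−1}·E_m) for an n×n complex matrix A, where E_m = (I_m over 0) is n×m. Let A' be an n×n matrix whose lower-left (n−m)×m block is zero and whose lower-right (n−m)×(n−m) block is a scalar matrix c·I. Then F(ξ + A') = F(ξ) for every n×n matrix ξ. -/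
section aux
variable {q m : ℕ}

def blk (hm : 0 < m) (j : Fin (q * m)) : Fin q :=
  ⟨j.1 / m, (Nat.div_lt_iff_lt_mul hm).mpr j.2⟩

def res (hm : 0 < m) (j : Fin (q * m)) : Fin m :=
  ⟨j.1 % m, Nat.mod_lt _ hm⟩

def blockT (hm : 0 < m) (M : Fin q → Fin q → Matrix (Fin m) (Fin m) ℂ) :
    Matrix (Fin (q * m)) (Fin (q * m)) ℂ :=
  fun i j => M (blk hm i) (blk hm j) (res hm i) (res hm j)

lemma hcat_apply (hm : 0 < m) (N : ℕ) (B : Fin q → Matrix (Fin N) (Fin m) ℂ)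
    (i : Fin N) (j : Fin (q * m)) : hcat q m N B i j = B (blk hm j) i (res hm j) := rfl

lemma blk_prod (hm : 0 < m) (t : Fin q) (r : Fin m) :
    blk hm (finProdFinEquiv (t, r)) = t := by
  ext
  simp [blk, finProdFinEquiv, Nat.add_mul_div_left _ _ hm, Nat.div_eq_of_lt r.2]

lemma res_prod (hm : 0 < m) (t : Fin q) (r : Fin m) :
    res hm (finProdFinEquiv (t, r)) = r := by
  ext
  simp [res, finProdFinEquiv, Nat.add_mul_mod_self_left, Nat.mod_eq_of_lt r.2]

lemma hcat_mul (hm : 0 < m) (B : Fin q → Matrix (Fin (q * m)) (Fin m) ℂ)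
    (M : Fin q → Fin q → Matrix (Fin m) (Fin m) ℂ) :
    hcat q m (q * m) B * blockT hm M
      = hcat q m (q * m) (fun s => ∑ t : Fin q, B t * M t s) := by
  ext i j
  rw [Matrix.mul_apply, ← finProdFinEquiv.sum_comp, Fintype.sum_prod_type]
  simp only [hcat_apply hm, blockT, blk_prod, res_prod, Matrix.sum_apply, Matrix.mul_apply]

lemma blockT_det (hm : 0 < m) (M : Fin q → Fin q → Matrix (Fin m) (Fin m) ℂ)
    (hdiag : ∀ t, M t t = 1) (hup : ∀ t s, s < t → M t s = 0) :
    (blockT hm M).det = 1 := by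
  rw [Matrix.det_of_upperTriangular]
  · have : ∀ i : Fin (q * m), blockT hm M i i = 1 := by
      intro i; simp [blockT, hdiag, Matrix.one_apply]
    simp [this]
  · intro i j hji
    have hji' : j.1 < i.1 := by simpa using hji
    rcases lt_trichotomy (blk hm j) (blk hm i) with h | h | h
    · exact congrFun (congrFun (hup _ _ h) _) _
    · have h1 : j.1 / m = i.1 / m := by
        have := congrArg Fin.val h; simpa [blk] using this
      have hres : ¬ res hm i = res hm j := by
        intro hr
        have h2 : i.1 % m = j.1 % m := by
          have := congrArg Fin.val hr; simpa [res] using this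
        have e1 : j.1 = m * (i.1 / m) + i.1 % m := by
          rw [← h1, h2]; exact (Nat.div_add_mod j.1 m).symm
        have e2 : i.1 = m * (i.1 / m) + i.1 % m := (Nat.div_add_mod i.1 m).symm
        exact absurd (e1.trans e2.symm) hji'.ne
      simp [blockT, h, hdiag, Matrix.one_apply, hres]
    · exfalso
      have h1 : i.1 / m < j.1 / m := by simpa [blk, Fin.lt_def] using h
      exact absurd (Nat.div_le_div_right (c := m) hji'.le) (not_le.mpr h1)

noncomputable def coef {n m : ℕ} (c : ℂ) (R : Matrix (Fin m) (Fin n) ℂ)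
    (X : Matrix (Fin n) (Fin n) ℂ) (E : Matrix (Fin n) (Fin m) ℂ) :
    ℕ → ℕ → Matrix (Fin m) (Fin m) ℂ
  | 0, t => if t = 0 then 1 else 0
  | s + 1, t =>
      (if t = 0 then R * X ^ s * E else coef c R X E s (t - 1)) + c • coef c R X E s t

lemma coef_zero_of_lt {n m : ℕ} (c : ℂ) (R : Matrix (Fin m) (Fin n) ℂ)
    (X : Matrix (Fin n) (Fin n) ℂ) (E : Matrix (Fin n) (Fin m) ℂ) :
    ∀ s t, s < t → coef c R X E s t = 0 := by
  intro s
  induction s with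
  | zero =>
    intro t ht
    have h0 : t ≠ 0 := by omega
    simp [coef, h0]
  | succ s ih =>
    intro t ht
    have h0 : t ≠ 0 := by omega
    simp [coef, h0, ih (t - 1) (by omega), ih t (by omega)]

lemma coef_diag {n m : ℕ} (c : ℂ) (R : Matrix (Fin m) (Fin n) ℂ)
    (X : Matrix (Fin n) (Fin n) ℂ) (E : Matrix (Fin n) (Fin m) ℂ) :
    ∀ s, coef c R X E s s = 1
  | 0 => by simp [coef]
  | s + 1 => by
      simp [coef, coef_diag c R X E s, coef_zero_of_lt c R X E s (s + 1) (by omega)]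

lemma key {n mm : ℕ} (c : ℂ) (R : Matrix (Fin mm) (Fin n) ℂ)
    (ξ : Matrix (Fin n) (Fin n) ℂ) (E : Matrix (Fin n) (Fin mm) ℂ) :
    ∀ s N, s < N →
      (ξ + (c • 1 + E * R)) ^ s * E =
        ∑ t ∈ Finset.range N,
          ξ ^ t * E * coef c R (ξ + (c • 1 + E * R)) E s t := by
  set X := ξ + (c • 1 + E * R) with hX
  intro s
  induction s with
  | zero =>
    intro N hN
    rw [Finset.sum_eq_single 0]
    · simp [coef]
    · intro t _ ht; simp [coef, ht]
    · intro h; exact absurd (Finset.mem_range.mpr hN) h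
  | succ s ih =>
    intro N hN
    obtain ⟨K, rfl⟩ : ∃ K, N = K + 1 := ⟨N - 1, by omega⟩
    have hsK : s < K := by omega
    have hS := ih K hsK
    set S := ∑ t ∈ Finset.range K, ξ ^ t * E * coef c R X E s t with hSdef
    have hcS : c • S
        = ∑ t ∈ Finset.range K, ξ ^ (t + 1) * E * (c • coef c R X E s (t + 1))
          + ξ ^ 0 * E * (c • coef c R X E s 0) := by
      have : S = ∑ t ∈ Finset.range (K + 1), ξ ^ t * E * coef c R X E s t := by
        rw [Finset.sum_range_succ, coef_zero_of_lt c R X E s K hsK]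
        simp [hSdef]
      rw [this, Finset.sum_range_succ', smul_add, Finset.smul_sum]
      congr 1
      · exact Finset.sum_congr rfl fun t _ => (Matrix.mul_smul _ c _).symm
      · exact (Matrix.mul_smul _ c _).symm
    calc X ^ (s + 1) * E = X * (X ^ s * E) := by rw [pow_succ', Matrix.mul_assoc]
      _ = ξ * S + c • S + E * (R * X ^ s * E) := by
          rw [hS]
          conv_lhs => rw [hX]
          rw [Matrix.add_mul, Matrix.add_mul, Matrix.smul_mul, Matrix.one_mul,
            Matrix.mul_assoc E R S, Matrix.mul_assoc R (X ^ s) E, hS, ← add_assoc]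
      _ = ∑ t ∈ Finset.range K, ξ ^ (t + 1) * E * coef c R X E s t + c • S
            + E * (R * X ^ s * E) := by
          have hto : ξ * S = ∑ t ∈ Finset.range K, ξ ^ (t + 1) * E * coef c R X E s t := by
            conv_lhs => rw [hSdef]
            rw [Matrix.mul_sum]
            exact Finset.sum_congr rfl fun t _ => by
              rw [← Matrix.mul_assoc, ← Matrix.mul_assoc, ← pow_succ']
          rw [hto]
      _ = ∑ t ∈ Finset.range (K + 1), ξ ^ t * E * coef c R X E (s + 1) t := by
          rw [Finset.sum_range_succ', hcS]
          have h1 : ∀ t : ℕ,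
              coef c R X E (s + 1) (t + 1)
                = coef c R X E s t + c • coef c R X E s (t + 1) := by
            intro t; simp [coef]
          have h0 : coef c R X E (s + 1) 0
              = R * X ^ s * E + c • coef c R X E s 0 := by
            simp [coef]
          simp only [h1, h0, Matrix.mul_add]
          rw [Finset.sum_add_distrib, pow_zero, Matrix.one_mul]
          abel

lemma decomp {m q : ℕ} (hm : 0 < m) (hmn : m ≤ q * m) (c : ℂ)
    (A' : Matrix (Fin (q * m)) (Fin (q * m)) ℂ)
    (h1 : lowLeft hmn A' = 0)
    (h2 : lowRight hmn A' = c • (1 : Matrix (Fin (q * m - m)) (Fin (q * m - m)) ℂ))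
    (R : Matrix (Fin m) (Fin (q * m)) ℂ)
    (hR : ∀ (i : Fin m) (j : Fin (q * m)),
      R i j = (A' - c • 1) ⟨i.1, lt_of_lt_of_le i.2 hmn⟩ j) :
    A' = c • 1 + Em ℂ (q * m) m * R := by
  ext i j
  by_cases hi : i.1 < m
  · have hsum : (Em ℂ (q * m) m * R) i j = R ⟨i.1, hi⟩ j := by
      rw [Matrix.mul_apply]
      rw [Finset.sum_eq_single (⟨i.1, hi⟩ : Fin m)]
      · simp [Em]
      · intro b _ hb
        have : (i : ℕ) ≠ (b : ℕ) := fun h => hb (Fin.ext h.symm)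
        simp [Em, this]
      · intro h; exact absurd (Finset.mem_univ _) h
    rw [Matrix.add_apply, hsum, hR]
    have hii : (⟨(⟨i.1, hi⟩ : Fin m).1, lt_of_lt_of_le (⟨i.1, hi⟩ : Fin m).2 hmn⟩
        : Fin (q * m)) = i := rfl
    rw [hii, Matrix.sub_apply]
    ring
  · have hsum : (Em ℂ (q * m) m * R) i j = 0 := by
      rw [Matrix.mul_apply]
      apply Finset.sum_eq_zero
      intro k _
      have : (i : ℕ) ≠ (k : ℕ) := by have := k.2; omega
      simp [Em, this]
    rw [Matrix.add_apply, hsum, add_zero]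
    have him : i.1 - m < q * m - m := by have := i.2; omega
    by_cases hj : j.1 < m
    · have h0 := congrFun (congrFun h1 ⟨i.1 - m, him⟩) ⟨j.1, hj⟩
      rw [show lowLeft hmn A' ⟨i.1 - m, him⟩ ⟨j.1, hj⟩
          = A' i j from by rw [lowLeft]; congr 1 <;> exact Fin.ext (by simp; omega)] at h0
      have hne : i ≠ j := fun h => by
        have : i.1 = j.1 := congrArg Fin.val h; omega
      simp only [Matrix.zero_apply] at h0
      rw [h0, Matrix.smul_apply, Matrix.one_apply_ne hne, smul_zero]
    · have hjm : j.1 - m < q * m - m := by have := j.2; omega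
      have h0 := congrFun (congrFun h2 ⟨i.1 - m, him⟩) ⟨j.1 - m, hjm⟩
      rw [show lowRight hmn A' ⟨i.1 - m, him⟩ ⟨j.1 - m, hjm⟩
          = A' i j from by rw [lowRight]; congr 1 <;> exact Fin.ext (by simp; omega)] at h0
      rw [h0]
      simp only [Matrix.smul_apply, Matrix.one_apply]
      by_cases hij : i = j
      · have : (⟨i.1 - m, him⟩ : Fin (q * m - m)) = ⟨j.1 - m, hjm⟩ :=
          Fin.ext (by simp [hij])
        simp [hij, this]
      · have : (⟨i.1 - m, him⟩ : Fin (q * m - m)) ≠ ⟨j.1 - m, hjm⟩ := by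
          intro h
          have hv : i.1 - m = j.1 - m := congrArg Fin.val h
          exact hij (Fin.ext (by omega))
        simp [hij, this]


theorem stmt_4 (m q : ℕ) (hm : 0 < m) (hq : 2 ≤ q) (hmn : m ≤ q * m) (c : ℂ)
    (A' : Matrix (Fin (q * m)) (Fin (q * m)) ℂ)
    (h1 : lowLeft hmn A' = 0)
    (h2 : lowRight hmn A' = c • (1 : Matrix (Fin (q * m - m)) (Fin (q * m - m)) ℂ)) :
    ∀ ξ : Matrix (Fin (q * m)) (Fin (q * m)) ℂ,
      (hcat q m (q * m) (fun s => (ξ + A') ^ (s : ℕ) * Em ℂ (q * m) m)).det =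
        (hcat q m (q * m) (fun s => ξ ^ (s : ℕ) * Em ℂ (q * m) m)).det := by
  intro ξ
  set E := Em ℂ (q * m) m with hE
  set R : Matrix (Fin m) (Fin (q * m)) ℂ :=
    fun i j => (A' - c • 1) ⟨i.1, lt_of_lt_of_le i.2 hmn⟩ j with hRdef
  have hA : A' = c • 1 + E * R := decomp hm hmn c A' h1 h2 R (fun i j => rfl)
  set M : Fin q → Fin q → Matrix (Fin m) (Fin m) ℂ :=
    fun t s => coef c R (ξ + (c • 1 + E * R)) E s.1 t.1 with hM
  have hkey : ∀ s : Fin q, (ξ + A') ^ (s : ℕ) * E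
      = ∑ t : Fin q, ξ ^ (t : ℕ) * E * M t s := by
    intro s
    rw [hM]
    rw [Fin.sum_univ_eq_sum_range
      (fun t => ξ ^ t * E * coef c R (ξ + (c • 1 + E * R)) E s.1 t) q]
    rw [hA]
    exact key c R ξ E s.1 q s.2
  have h3 : hcat q m (q * m) (fun s : Fin q => (ξ + A') ^ (s : ℕ) * E)
      = hcat q m (q * m) (fun s : Fin q => ξ ^ (s : ℕ) * E) * blockT hm M := by
    rw [hcat_mul hm, funext hkey]
  rw [h3, Matrix.det_mul,
    blockT_det hm M (fun t => coef_diag c R _ E t.1)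
      (fun t s hst => coef_zero_of_lt c R _ E s.1 t.1 hst),
    mul_one]
end aux
end

section
/- Let f₁ and f₂ be nonzero homogeneous polynomials of positive degree in ℂ[x₁,…,x_n] that are algebraically dependent over ℂ (i.e. there is a nonzero polynomial P in two variables with P(f₁,f₂) = 0). Then there exist coprime positive integers a, b and a nonzero constant c ∈ ℂ such that f₁^a = c·f₂^b. -/
open MvPolynomial

lemma arith_aux (d₁ d₂ i₀ j' i j : ℕ) (hd₁ : 0 < d₁) (hd₂ : 0 < d₂)
    (heq : i * d₁ + j * d₂ = i₀ * d₁ + j' * d₂) (hi : i₀ ≤ i) :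
    i = i₀ + (d₂ / Nat.gcd d₁ d₂) * ((i - i₀) / (d₂ / Nat.gcd d₁ d₂)) ∧
    j + (d₁ / Nat.gcd d₁ d₂) * ((i - i₀) / (d₂ / Nat.gcd d₁ d₂)) = j' := by
  set g := Nat.gcd d₁ d₂ with hg
  have hgpos : 0 < g := Nat.gcd_pos_of_pos_left _ hd₁
  set a := d₂ / g with ha
  set b := d₁ / g with hb
  have hag : a * g = d₂ := Nat.div_mul_cancel (Nat.gcd_dvd_right _ _)
  have hbg : b * g = d₁ := Nat.div_mul_cancel (Nat.gcd_dvd_left _ _)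
  have hapos : 0 < a := Nat.div_pos (Nat.le_of_dvd hd₂ (Nat.gcd_dvd_right _ _)) hgpos
  have hco : Nat.Coprime b a := Nat.coprime_div_gcd_div_gcd hgpos
  have h1 : i₀ * d₁ ≤ i * d₁ := Nat.mul_le_mul_right _ hi
  have hj : j ≤ j' := Nat.le_of_mul_le_mul_right (by omega) hd₂
  have hsub : (i - i₀) * d₁ = (j' - j) * d₂ := by
    have hz : ((i : ℤ) - i₀) * d₁ = ((j' : ℤ) - j) * d₂ := by
      have heqz : (i : ℤ) * d₁ + j * d₂ = i₀ * d₁ + j' * d₂ := by exact_mod_cast heq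
      ring_nf
      ring_nf at heqz
      linarith
    have h2 : ((i - i₀ : ℕ) : ℤ) * d₁ = ((j' - j : ℕ) : ℤ) * d₂ := by
      push_cast [hi, hj]
      exact hz
    exact_mod_cast h2
  have h3 : (i - i₀) * b * g = (j' - j) * a * g := by
    rw [mul_assoc, mul_assoc, hbg, hag]; exact hsub
  have h4 : (i - i₀) * b = (j' - j) * a := Nat.eq_of_mul_eq_mul_right hgpos h3
  have h5 : a ∣ (i - i₀) := by
    have : a ∣ (i - i₀) * b := ⟨j' - j, by rw [h4, mul_comm]⟩
    exact (Nat.Coprime.dvd_of_dvd_mul_right hco.symm this)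
  obtain ⟨s, hs⟩ := h5
  have hsval : (i - i₀) / a = s := by rw [hs]; exact Nat.mul_div_cancel_left s hapos
  constructor
  · rw [hsval, ← hs]; omega
  · rw [hsval]
    rw [hs] at h4
    have h6 : a * (s * b) = a * (j' - j) := by
      rw [← mul_assoc, h4, mul_comm]
    have h7 : s * b = j' - j := Nat.eq_of_mul_eq_mul_left hapos h6
    rw [mul_comm b s, h7]
    omega

set_option maxHeartbeats 1000000 in
theorem stmt_8 (n : ℕ) (f₁ f₂ : MvPolynomial (Fin n) ℂ) (d₁ d₂ : ℕ)
    (h₁ : f₁ ≠ 0) (h₂ : f₂ ≠ 0) (hd₁ : 0 < d₁) (hd₂ : 0 < d₂)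
    (hf₁ : f₁.IsHomogeneous d₁) (hf₂ : f₂.IsHomogeneous d₂)
    (P : MvPolynomial (Fin 2) ℂ) (hP : P ≠ 0)
    (hdep : MvPolynomial.aeval ![f₁, f₂] P = 0) :
    ∃ (a b : ℕ) (c : ℂ), 0 < a ∧ 0 < b ∧ Nat.Coprime a b ∧ c ≠ 0 ∧
      f₁ ^ a = MvPolynomial.C c * f₂ ^ b := by
  classical
  set g := Nat.gcd d₁ d₂ with hg
  have hgpos : 0 < g := Nat.gcd_pos_of_pos_left _ hd₁
  set a := d₂ / g with ha
  set b := d₁ / g with hb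
  have hapos : 0 < a := Nat.div_pos (Nat.le_of_dvd hd₂ (Nat.gcd_dvd_right _ _)) hgpos
  have hbpos : 0 < b := Nat.div_pos (Nat.le_of_dvd hd₁ (Nat.gcd_dvd_left _ _)) hgpos
  have hco : Nat.Coprime a b := (Nat.coprime_div_gcd_div_gcd hgpos).symm
  -- expand aeval as sum of terms
  have hterm : ∀ m : Fin 2 →₀ ℕ, (aeval ![f₁, f₂]) (monomial m (P.coeff m)) =
      C (P.coeff m) * (f₁ ^ m 0 * f₂ ^ m 1) := by
    intro m
    rw [aeval_monomial, Finsupp.prod_pow]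
    simp [Fin.prod_univ_two, algebraMap_eq]
  have hsum : ∑ m ∈ P.support, C (P.coeff m) * (f₁ ^ m 0 * f₂ ^ m 1) = 0 := by
    rw [← hdep]
    conv_rhs => rw [P.as_sum]
    rw [map_sum]
    exact Finset.sum_congr rfl fun m _ => (hterm m).symm
  have hhom : ∀ m : Fin 2 →₀ ℕ,
      (C (P.coeff m) * (f₁ ^ m 0 * f₂ ^ m 1)).IsHomogeneous (m 0 * d₁ + m 1 * d₂) := by
    intro m
    have h := (isHomogeneous_C (Fin n) (P.coeff m)).mul ((hf₁.pow (m 0)).mul (hf₂.pow (m 1)))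
    simpa [mul_comm] using h
  obtain ⟨m₀, hm₀⟩ := (support_nonempty.mpr hP)
  set N := m₀ 0 * d₁ + m₀ 1 * d₂ with hN
  set S := P.support.filter (fun m => m 0 * d₁ + m 1 * d₂ = N) with hS
  have hm₀S : m₀ ∈ S := by simp [hS, hm₀, hN]
  have hSne : S.Nonempty := ⟨m₀, hm₀S⟩
  have hScoeff : ∀ m ∈ S, P.coeff m ≠ 0 := by
    intro m hm
    exact mem_support_iff.mp (Finset.mem_filter.mp hm).1
  have hSw : ∀ m ∈ S, m 0 * d₁ + m 1 * d₂ = N := by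
    intro m hm; exact (Finset.mem_filter.mp hm).2
  -- extract homogeneous component of degree N
  have hrel : ∑ m ∈ S, C (P.coeff m) * (f₁ ^ m 0 * f₂ ^ m 1) = 0 := by
    have h0 := congrArg (homogeneousComponent N) hsum
    rw [map_sum, map_zero] at h0
    rw [← h0, hS, Finset.sum_filter]
    apply Finset.sum_congr rfl
    intro m _
    rw [homogeneousComponent_of_mem ((mem_homogeneousSubmodule _ _).mpr (hhom m))]
    by_cases h : m 0 * d₁ + m 1 * d₂ = N
    · simp [h]
    · simp [h, Ne.symm h]
  -- minimum exponents
  obtain ⟨m', hm'S, hi₀⟩ := Finset.exists_mem_eq_inf' hSne (fun m => m 0)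
  obtain ⟨m'', hm''S, hj₀⟩ := Finset.exists_mem_eq_inf' hSne (fun m => m 1)
  set i₀ := m' 0 with hi₀def
  set j' := m' 1 with hj'def
  set j₀ := m'' 1 with hj₀def
  have hi₀le : ∀ m ∈ S, i₀ ≤ m 0 := by
    intro m hm; rw [← hi₀]; exact Finset.inf'_le _ hm
  have hj₀le : ∀ m ∈ S, j₀ ≤ m 1 := by
    intro m hm; rw [← hj₀]; exact Finset.inf'_le _ hm
  set s : (Fin 2 →₀ ℕ) → ℕ := fun m => (m 0 - i₀) / a with hsdef
  have key : ∀ m ∈ S, m 0 = i₀ + a * s m ∧ m 1 + b * s m = j' := by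
    intro m hm
    exact arith_aux d₁ d₂ i₀ j' (m 0) (m 1) hd₁ hd₂
      (by rw [hSw m hm, hSw m' hm'S]) (hi₀le m hm)
  set T := s m'' with hT
  have hTj : j₀ + b * T = j' := (key m'' hm''S).2
  have key2 : ∀ m ∈ S, s m ≤ T ∧ m 1 = j₀ + b * (T - s m) := by
    intro m hm
    obtain ⟨h1, h2⟩ := key m hm
    have hj := hj₀le m hm
    have hle : b * s m ≤ b * T := by omega
    have hsle : s m ≤ T := Nat.le_of_mul_le_mul_left hle hbpos
    refine ⟨hsle, ?_⟩
    have : b * (T - s m) = b * T - b * s m := Nat.mul_sub b T (s m)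
    omega
  -- factor out and get relation in f₁^a, f₂^b
  have hrel2 : ∑ m ∈ S, C (P.coeff m) * ((f₁ ^ a) ^ s m * (f₂ ^ b) ^ (T - s m)) = 0 := by
    have hfactor : f₁ ^ i₀ * f₂ ^ j₀ *
        ∑ m ∈ S, C (P.coeff m) * ((f₁ ^ a) ^ s m * (f₂ ^ b) ^ (T - s m)) = 0 := by
      rw [Finset.mul_sum, ← hrel]
      apply Finset.sum_congr rfl
      intro m hm
      obtain ⟨h1, _⟩ := key m hm
      obtain ⟨_, h2⟩ := key2 m hm
      rw [h1, h2, pow_add, pow_add, ← pow_mul, ← pow_mul]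
      ring
    rcases mul_eq_zero.mp hfactor with h | h
    · exact absurd h (mul_ne_zero (pow_ne_zero _ h₁) (pow_ne_zero _ h₂))
    · exact h
  -- injectivity of s on S
  have hsinj : ∀ m1 ∈ S, ∀ m2 ∈ S, s m1 = s m2 → m1 = m2 := by
    intro m1 hm1 m2 hm2 hse
    obtain ⟨e1, e2⟩ := key m1 hm1
    obtain ⟨e3, e4⟩ := key m2 hm2
    rw [hse] at e1 e2
    ext i
    fin_cases i
    · show m1 0 = m2 0; omega
    · show m1 1 = m2 1; omega
  -- the univariate polynomial
  set p : Polynomial ℂ := ∑ m ∈ S, Polynomial.C (P.coeff m) * Polynomial.X ^ (s m) with hp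
  have hpne : p ≠ 0 := by
    intro h
    have hc : p.coeff (s m₀) = 0 := by rw [h]; simp
    rw [hp, Polynomial.finset_sum_coeff] at hc
    rw [Finset.sum_eq_single m₀] at hc
    · rw [Polynomial.coeff_C_mul, Polynomial.coeff_X_pow] at hc
      simp at hc
      exact hScoeff m₀ hm₀S hc
    · intro m hm hne
      rw [Polynomial.coeff_C_mul, Polynomial.coeff_X_pow]
      have : ¬ (s m₀ = s m) := fun hh => hne (hsinj m hm m₀ hm₀S hh.symm)
      simp [this]
    · intro h'; exact absurd hm₀S h'
  -- move to fraction field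
  set K := FractionRing (MvPolynomial (Fin n) ℂ) with hK
  set φ : MvPolynomial (Fin n) ℂ →+* K := algebraMap _ _ with hφ
  have hφinj : Function.Injective φ := IsFractionRing.injective _ _
  set ψ : ℂ →+* K := φ.comp (C : ℂ →+* MvPolynomial (Fin n) ℂ) with hψ
  have hψC : ∀ c : ℂ, ψ c = φ (C c) := fun c => rfl
  have hψinj : Function.Injective ψ := hφinj.comp (C_injective _ _)
  have huK : φ (f₁ ^ a) ≠ 0 := fun h => (pow_ne_zero a h₁) (hφinj (by simpa using h))
  have hvK : φ (f₂ ^ b) ≠ 0 := fun h => (pow_ne_zero b h₂) (hφinj (by simpa using h))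
  set t : K := φ (f₁ ^ a) / φ (f₂ ^ b) with ht
  have htne : t ≠ 0 := div_ne_zero huK hvK
  -- t is a root of p.map ψ
  have hq : Polynomial.eval t (p.map ψ) = 0 := by
    have hmul : (Polynomial.eval t (p.map ψ)) * φ (f₂ ^ b) ^ T = 0 := by
      rw [hp, Polynomial.map_sum, Polynomial.eval_finset_sum, Finset.sum_mul]
      have h0 := congrArg φ hrel2
      rw [map_sum, map_zero] at h0
      rw [← h0]
      apply Finset.sum_congr rfl
      intro m hm
      obtain ⟨hsle, _⟩ := key2 m hm
      rw [Polynomial.map_mul, Polynomial.map_pow, Polynomial.map_C, Polynomial.map_X]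
      rw [Polynomial.eval_mul, Polynomial.eval_pow, Polynomial.eval_C, Polynomial.eval_X]
      have hts : t ^ s m = φ (f₁ ^ a) ^ s m / φ (f₂ ^ b) ^ s m := by rw [ht, div_pow]
      rw [hts, hψC]
      conv_rhs => rw [map_mul, map_mul, map_pow, map_pow]
      have hTsplit : φ (f₂ ^ b) ^ T = φ (f₂ ^ b) ^ s m * φ (f₂ ^ b) ^ (T - s m) := by
        rw [← pow_add]
        congr 1
        omega
      rw [hTsplit]
      have hvs : φ (f₂ ^ b) ^ s m ≠ 0 := pow_ne_zero _ hvK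
      rw [mul_assoc]
      congr 1
      rw [← mul_assoc, div_mul_cancel₀ _ hvs]
      simp [map_pow]
    rcases mul_eq_zero.mp hmul with h | h
    · exact h
    · exact absurd h (pow_ne_zero _ hvK)
  have hpqne : p.map ψ ≠ 0 := Polynomial.map_ne_zero hpne
  have htroots : t ∈ (p.map ψ).roots := by
    rw [Polynomial.mem_roots hpqne]
    exact hq
  rw [← Polynomial.roots_map_of_injective_of_card_eq_natDegree hψinj IsAlgClosed.card_roots_eq_natDegree] at htroots
  obtain ⟨r, hr, hrt⟩ := Multiset.mem_map.mp htroots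
  have hr0 : r ≠ 0 := fun h => htne (by rw [← hrt, h, map_zero])
  refine ⟨a, b, r, hapos, hbpos, hco, hr0, hφinj ?_⟩
  calc φ (f₁ ^ a) = t * φ (f₂ ^ b) := by rw [ht, div_mul_cancel₀ _ hvK]
    _ = φ (C r) * φ (f₂ ^ b) := by rw [← hrt, hψC]
    _ = φ (C r * f₂ ^ b) := (map_mul φ _ _).symm
end

section
/- Let n = qm + r with q ≥ 1 and 0 < r ≤ m, let A be an n×n complex matrix with lower-left (n−m)×m block A_- and lower-right (n−m)×(n−m) block β, let I ⊆ {1,…,m} be a subset of size r, and let E_m = (I_m over 0) be the n×m matrix with identity on top. Writing v_I for the submatrix of an n×m (resp. (n−m)×m) matrix v consisting of the columns indexed by I, we have det(E_m | A·E_m | … | A^{q−1}·E_m | (A^q·E_m)_I) = det(A_- | β·A_- | … | β^{q−2}·A_- | β^{q−1}·(A_-)_I), where both sides are determinants of square matrices (of sizes n and n−m respectively) formed by horizontal concatenation of the indicated blocks. -/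
open Matrix Finset

namespace Stmt15Aux

lemma sum_split {N M : ℕ} (hm : M ≤ N) (f : Fin N → ℂ) :
    ∑ k, f k = (∑ p : Fin M, f ⟨p.1, by omega⟩) + ∑ i : Fin (N - M), f ⟨M + i.1, by have := i.2; omega⟩ := by
  rw [← Equiv.sum_comp (finSumFinEquiv.trans (finCongr (show M + (N - M) = N by omega))) f,
    Fintype.sum_sum_type]
  rfl

lemma sum_blocks {a b : ℕ} (f : Fin (a * b) → ℂ) :
    ∑ k, f k = ∑ t : Fin a, ∑ p : Fin b, f (finProdFinEquiv (t, p)) := by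
  rw [← Equiv.sum_comp finProdFinEquiv f, Fintype.sum_prod_type]


end Stmt15Aux


section
variable {m q r : ℕ}

/-- top `m × m` block of `A^s * E`. -/
def XX (hm : m ≤ q * m + r) (A : Matrix (Fin (q * m + r)) (Fin (q * m + r)) ℂ) (s : ℕ) :
    Matrix (Fin m) (Fin m) ℂ :=
  fun p c => (A ^ s) ⟨p.1, by omega⟩ ⟨c.1, by omega⟩

/-- bottom `(n-m) × m` block of `A^s * E`. -/
def YY (hm : m ≤ q * m + r) (A : Matrix (Fin (q * m + r)) (Fin (q * m + r)) ℂ) (s : ℕ) :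
    Matrix (Fin (q * m + r - m)) (Fin m) ℂ :=
  fun i c => (A ^ s) ⟨m + i.1, by have := i.2; omega⟩ ⟨c.1, by omega⟩

lemma XX_zero (hm : m ≤ q * m + r) (A : Matrix (Fin (q * m + r)) (Fin (q * m + r)) ℂ) :
    XX hm A 0 = 1 := by
  funext p c
  simp [XX, Matrix.one_apply, Fin.ext_iff]

lemma YY_zero (hm : m ≤ q * m + r) (A : Matrix (Fin (q * m + r)) (Fin (q * m + r)) ℂ) :
    YY hm A 0 = 0 := by
  funext i c
  have hc := c.2
  simp only [YY, pow_zero, Matrix.one_apply, Matrix.zero_apply]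
  rw [if_neg]
  simp only [Fin.ext_iff]
  omega

lemma YY_succ (hm : m ≤ q * m + r) (A : Matrix (Fin (q * m + r)) (Fin (q * m + r)) ℂ) (s : ℕ) :
    YY hm A (s + 1) = lowLeft hm A * XX hm A s + lowRight hm A * YY hm A s := by
  funext i c
  simp only [YY, pow_succ', Matrix.add_apply, Matrix.mul_apply, lowLeft, lowRight, XX]
  rw [Stmt15Aux.sum_split hm]

lemma YY_formula (hm : m ≤ q * m + r) (A : Matrix (Fin (q * m + r)) (Fin (q * m + r)) ℂ)
    (s : ℕ) :
    YY hm A (s + 1) =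
      ∑ t ∈ Finset.range (s + 1), (lowRight hm A) ^ t * lowLeft hm A * XX hm A (s - t) := by
  induction s with
  | zero => simp [YY_succ, XX_zero, YY_zero]
  | succ s ih =>
    rw [YY_succ, ih, Matrix.mul_sum,
      Finset.sum_range_succ' (fun t => lowRight hm A ^ t * lowLeft hm A * XX hm A (s + 1 - t))
        (s + 1)]
    simp only [Nat.succ_sub_succ, pow_zero, one_mul, Nat.sub_zero, ← Matrix.mul_assoc,
      ← pow_succ']
    rw [Matrix.one_mul]
    exact add_comm _ _

end

section
variable {m q r : ℕ}

lemma mul_Em {N : ℕ} (hm : m ≤ N) (B : Matrix (Fin N) (Fin N) ℂ) (i : Fin N) (c : Fin m) :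
    (B * Em ℂ N m) i c = B i ⟨c.1, by have := c.2; omega⟩ := by
  rw [Matrix.mul_apply]
  rw [Finset.sum_eq_single (⟨c.1, by have := c.2; omega⟩ : Fin N)]
  · simp [Em]
  · intro k _ hk
    have : ¬ (k.1 = c.1) := fun h => hk (Fin.ext h)
    simp [Em, this]
  · simp

lemma mul_sub_apply {a b c d : ℕ} (P : Matrix (Fin a) (Fin b) ℂ) (Q : Matrix (Fin b) (Fin c) ℂ)
    (ι : Fin d → Fin c) (i : Fin a) (j : Fin d) :
    (P * Q.submatrix id ι) i j = (P * Q) i (ι j) := by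
  simp [Matrix.mul_apply]

/-- the square matrix `[E | (0;Y_1) | … | (0;Y_{q-1}) | (0;(Y_q)_I)]`. -/
noncomputable def MM (hm0 : 0 < m) (hm : m ≤ q * m + r) (A : Matrix (Fin (q * m + r)) (Fin (q * m + r)) ℂ)
    (ι : Fin r → Fin m) : Matrix (Fin (q * m + r)) (Fin (q * m + r)) ℂ :=
  fun i j =>
    if hj : j.1 < m then (if i.1 = j.1 then (1 : ℂ) else 0)
    else if hi : i.1 < m then 0
    else if hj2 : j.1 < q * m then
      YY hm A (j.1 / m) ⟨i.1 - m, by have := i.2; omega⟩ ⟨j.1 % m, Nat.mod_lt _ hm0⟩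
    else
      YY hm A q ⟨i.1 - m, by have := i.2; omega⟩ (ι ⟨j.1 - q * m, by have := j.2; omega⟩)

/-- the unitriangular matrix of column operations on the big matrix. -/
noncomputable def UU (hm0 : 0 < m) (hm : m ≤ q * m + r) (A : Matrix (Fin (q * m + r)) (Fin (q * m + r)) ℂ)
    (ι : Fin r → Fin m) : Matrix (Fin (q * m + r)) (Fin (q * m + r)) ℂ :=
  fun k j =>
    if hk : k.1 < m then
      if hj : j.1 < q * m then
        XX hm A (j.1 / m) ⟨k.1, hk⟩ ⟨j.1 % m, Nat.mod_lt _ hm0⟩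
      else XX hm A q ⟨k.1, hk⟩ (ι ⟨j.1 - q * m, by have := j.2; omega⟩)
    else if k = j then 1 else 0

/-- the lower-right square block `[Y_1 | … | Y_{q-1} | (Y_q)_I]`. -/
noncomputable def WW (hm0 : 0 < m) (hm : m ≤ q * m + r) (A : Matrix (Fin (q * m + r)) (Fin (q * m + r)) ℂ)
    (ι : Fin r → Fin m) : Matrix (Fin (q * m + r - m)) (Fin (q * m + r - m)) ℂ :=
  fun i j =>
    if hj : j.1 < (q - 1) * m then
      YY hm A (j.1 / m + 1) i ⟨j.1 % m, Nat.mod_lt _ hm0⟩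
    else
      YY hm A q i (ι ⟨j.1 - (q - 1) * m, by
        have h1 : (q - 1) * m = q * m - m := by rw [Nat.sub_mul, one_mul]
        have := j.2; omega⟩)

/-- the target matrix `[A₋ | βA₋ | … | β^{q-2}A₋ | β^{q-1}(A₋)_I]`. -/
noncomputable def VV (hm0 : 0 < m) (hm : m ≤ q * m + r) (A : Matrix (Fin (q * m + r)) (Fin (q * m + r)) ℂ)
    (ι : Fin r → Fin m) : Matrix (Fin (q * m + r - m)) (Fin (q * m + r - m)) ℂ :=
  fun i j =>
    if hj : j.1 < (q - 1) * m then
      ((lowRight hm A) ^ (j.1 / m) * lowLeft hm A) i ⟨j.1 % m, Nat.mod_lt _ hm0⟩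
    else
      ((lowRight hm A) ^ (q - 1) * lowLeft hm A) i (ι ⟨j.1 - (q - 1) * m, by
        have h1 : (q - 1) * m = q * m - m := by rw [Nat.sub_mul, one_mul]
        have := j.2; omega⟩)

/-- the unitriangular matrix of column operations on the small matrix. -/
noncomputable def U2 (hm0 : 0 < m) (hm : m ≤ q * m + r) (A : Matrix (Fin (q * m + r)) (Fin (q * m + r)) ℂ)
    (ι : Fin r → Fin m) : Matrix (Fin (q * m + r - m)) (Fin (q * m + r - m)) ℂ :=
  fun k j =>
    if hj : j.1 < (q - 1) * m then
      if hk : k.1 / m ≤ j.1 / m then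
        XX hm A (j.1 / m - k.1 / m) ⟨k.1 % m, Nat.mod_lt _ hm0⟩ ⟨j.1 % m, Nat.mod_lt _ hm0⟩
      else 0
    else
      if hk : k.1 < (q - 1) * m then
        XX hm A (q - 1 - k.1 / m) ⟨k.1 % m, Nat.mod_lt _ hm0⟩ (ι ⟨j.1 - (q - 1) * m, by
          have h1 : (q - 1) * m = q * m - m := by rw [Nat.sub_mul, one_mul]
          have := j.2; omega⟩)
      else if k = j then 1 else 0

end

section
variable {m q r : ℕ}

lemma det_UU (hq : 1 ≤ q) (hm0 : 0 < m) (hm : m ≤ q * m + r)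
    (A : Matrix (Fin (q * m + r)) (Fin (q * m + r)) ℂ) (ι : Fin r → Fin m) :
    (UU hm0 hm A ι).det = 1 := by
  have hmq : m ≤ q * m := Nat.le_mul_of_pos_left m hq
  rw [Matrix.det_of_upperTriangular]
  · apply Finset.prod_eq_one
    intro j _
    by_cases h : j.1 < m
    · have hq' : j.1 < q * m := by omega
      have hmod : j.1 % m = j.1 := Nat.mod_eq_of_lt h
      simp only [UU, dif_pos h, dif_pos hq', Nat.div_eq_of_lt h, XX_zero]
      simp [Matrix.one_apply, Fin.ext_iff, hmod]
    · simp only [UU, dif_neg h]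
      simp
  · intro k j hjk
    rw [Fin.lt_def] at hjk
    simp only [id_eq] at hjk
    by_cases hk : k.1 < m
    · have hjm : j.1 < m := lt_trans hjk hk
      have hq' : j.1 < q * m := by omega
      simp only [UU, dif_pos hk, dif_pos hq', Nat.div_eq_of_lt hjm, XX_zero]
      apply Matrix.one_apply_ne
      simp only [ne_eq, Fin.ext_iff, Nat.mod_eq_of_lt hjm]
      omega
    · simp only [UU, dif_neg hk]
      rw [if_neg]
      exact fun h => absurd (congrArg Fin.val h) (by omega)

lemma det_U2 (hq : 1 ≤ q) (hm0 : 0 < m) (hm : m ≤ q * m + r)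
    (A : Matrix (Fin (q * m + r)) (Fin (q * m + r)) ℂ) (ι : Fin r → Fin m) :
    (U2 hm0 hm A ι).det = 1 := by
  rw [Matrix.det_of_upperTriangular]
  · apply Finset.prod_eq_one
    intro j _
    by_cases h : j.1 < (q - 1) * m
    · simp only [U2, dif_pos h]
      rw [dif_pos (le_refl (j.1 / m)), Nat.sub_self, XX_zero]
      simp [Matrix.one_apply]
    · simp only [U2, dif_neg h]
      simp
  · intro k j hjk
    rw [Fin.lt_def] at hjk
    simp only [id_eq] at hjk
    by_cases hj : j.1 < (q - 1) * m
    · by_cases hk2 : k.1 / m ≤ j.1 / m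
      · have h1 : j.1 / m ≤ k.1 / m := Nat.div_le_div_right (le_of_lt hjk)
        have he : k.1 / m = j.1 / m := le_antisymm hk2 h1
        simp only [U2, dif_pos hj, dif_pos hk2]
        rw [he, Nat.sub_self, XX_zero]
        apply Matrix.one_apply_ne
        simp only [ne_eq, Fin.ext_iff]
        have e1 := Nat.div_add_mod j.1 m
        have e2 := Nat.div_add_mod k.1 m
        rw [he] at e2
        intro hcon
        omega
      · simp [U2, dif_pos hj, dif_neg hk2]
    · have hk : ¬ k.1 < (q - 1) * m := by omega
      simp only [U2, dif_neg hj, dif_neg hk]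
      rw [if_neg]
      exact fun h => absurd (congrArg Fin.val h) (by omega)

end

section
variable {m q r : ℕ}

lemma big_eq (hq : 1 ≤ q) (hr0 : 0 < r) (hrm : r ≤ m) (hm : m ≤ q * m + r) (hm0 : 0 < m)
    (A : Matrix (Fin (q * m + r)) (Fin (q * m + r)) ℂ) (ι : Fin r → Fin m) :
    hcat2 (q * m) r (q * m + r) (hcat q m (q * m + r) (fun s => A ^ (s : ℕ) * Em ℂ (q * m + r) m))
        ((A ^ q * Em ℂ (q * m + r) m).submatrix id ι)
      = MM hm0 hm A ι * UU hm0 hm A ι := by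
  have hmq : m ≤ q * m := Nat.le_mul_of_pos_left m hq
  funext i j
  rw [Matrix.mul_apply, Stmt15Aux.sum_split hm]
  have h1 : (∑ p : Fin m, MM hm0 hm A ι i ⟨p.1, by have := p.2; omega⟩ *
      UU hm0 hm A ι ⟨p.1, by have := p.2; omega⟩ j)
      = if hi : i.1 < m then UU hm0 hm A ι ⟨i.1, by omega⟩ j else 0 := by
    by_cases hi : i.1 < m
    · rw [dif_pos hi, Finset.sum_eq_single (⟨i.1, hi⟩ : Fin m)]
      · have h : MM hm0 hm A ι i ⟨i.1, by omega⟩ = 1 := by simp [MM, hi]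
        rw [h, one_mul]
      · intro p _ hp
        have h : MM hm0 hm A ι i ⟨p.1, by have := p.2; omega⟩ = 0 := by
          simp only [MM]
          rw [dif_pos (show p.1 < m from p.2), if_neg (fun h => hp (Fin.ext h.symm))]
        rw [h, zero_mul]
      · simp
    · rw [dif_neg hi, Finset.sum_eq_zero]
      intro p _
      have h : MM hm0 hm A ι i ⟨p.1, by have := p.2; omega⟩ = 0 := by
        simp only [MM]
        rw [dif_pos (show p.1 < m from p.2), if_neg (by have := p.2; omega)]
      rw [h, zero_mul]
  have hU : ∀ p : Fin (q * m + r - m), UU hm0 hm A ι ⟨m + p.1, by have := p.2; omega⟩ j =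
      if (⟨m + p.1, by have := p.2; omega⟩ : Fin (q * m + r)) = j then 1 else 0 := by
    intro p
    simp only [UU]
    rw [dif_neg (by omega)]
  have h2 : (∑ p : Fin (q * m + r - m), MM hm0 hm A ι i ⟨m + p.1, by have := p.2; omega⟩ *
      UU hm0 hm A ι ⟨m + p.1, by have := p.2; omega⟩ j)
      = if m ≤ j.1 then MM hm0 hm A ι i j else 0 := by
    by_cases hj : m ≤ j.1
    · rw [if_pos hj,
        Finset.sum_eq_single (⟨j.1 - m, by have := j.2; omega⟩ : Fin (q * m + r - m))]
      · have he : (⟨m + (j.1 - m), by have := j.2; omega⟩ : Fin (q * m + r)) = j :=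
          Fin.ext (by simp; omega)
        rw [hU, if_pos he, mul_one, he]
      · intro p _ hp
        rw [hU, if_neg, mul_zero]
        intro h
        have hval : m + p.1 = j.1 := congrArg Fin.val h
        exact hp (Fin.ext (show p.1 = j.1 - m by omega))
      · simp
    · rw [if_neg hj, Finset.sum_eq_zero]
      intro p _
      rw [hU, if_neg, mul_zero]
      intro h
      have hval : m + p.1 = j.1 := congrArg Fin.val h
      omega
  rw [h1, h2]
  by_cases hi : i.1 < m
  · rw [dif_pos hi]
    by_cases hj : j.1 < q * m
    · have hjm : ¬ m ≤ j.1 → True := fun _ => trivial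
      rw [show (if m ≤ j.1 then MM hm0 hm A ι i j else 0) = 0 by
        by_cases h : m ≤ j.1
        · rw [if_pos h]
          simp only [MM]
          rw [dif_neg (by omega), dif_pos hi]
        · rw [if_neg h], add_zero]
      simp only [hcat2, hcat, UU]
      rw [dif_pos hj, dif_pos hi, dif_pos hj, mul_Em hm]
      rfl
    · rw [show (if m ≤ j.1 then MM hm0 hm A ι i j else 0) = 0 by
        rw [if_pos (by omega)]
        simp only [MM]
        rw [dif_neg (by omega), dif_pos hi], add_zero]
      simp only [hcat2, UU, Matrix.submatrix_apply, id_eq]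
      rw [dif_neg hj, dif_pos hi, dif_neg hj, mul_Em hm]
      rfl
  · rw [dif_neg hi, zero_add]
    by_cases hj1 : j.1 < m
    · rw [if_neg (by omega)]
      simp only [hcat2, hcat]
      rw [dif_pos (show j.1 < q * m by omega), mul_Em hm]
      have hd : j.1 / m = 0 := Nat.div_eq_of_lt hj1
      rw [hd, pow_zero, Matrix.one_apply, if_neg]
      simp only [Fin.ext_iff]
      have : j.1 % m = j.1 := Nat.mod_eq_of_lt hj1
      omega
    · rw [if_pos (by omega)]
      by_cases hj : j.1 < q * m
      · simp only [hcat2, hcat, MM]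
        rw [dif_pos hj, dif_neg (show ¬ (j.1 < m) by omega), dif_neg hi, dif_pos hj, mul_Em hm]
        simp only [YY]
        have hrow : i = (⟨m + (i.1 - m), by have := i.2; omega⟩ : Fin (q * m + r)) :=
          Fin.ext (show i.1 = m + (i.1 - m) by omega)
        exact congrFun (congrArg _ hrow) _
      · simp only [hcat2, MM, Matrix.submatrix_apply, id_eq]
        rw [dif_neg hj, dif_neg (show ¬ (j.1 < m) by omega), dif_neg hi, dif_neg hj, mul_Em hm]
        simp only [YY]
        have hrow : i = (⟨m + (i.1 - m), by have := i.2; omega⟩ : Fin (q * m + r)) :=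
          Fin.ext (show i.1 = m + (i.1 - m) by omega)
        exact congrFun (congrArg _ hrow) _

end

section
variable {m q r : ℕ}

lemma MM_det (hq : 1 ≤ q) (hm0 : 0 < m) (hm : m ≤ q * m + r)
    (A : Matrix (Fin (q * m + r)) (Fin (q * m + r)) ℂ) (ι : Fin r → Fin m) :
    (MM hm0 hm A ι).det = (WW hm0 hm A ι).det := by
  have hmq : m ≤ q * m := Nat.le_mul_of_pos_left m hq
  have h1 : (q - 1) * m = q * m - m := by rw [Nat.sub_mul, one_mul]
  have hN : q * m + r = m + (q * m + r - m) := by omega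
  have he : ∀ i : Fin (q * m + r),
      ((finCongr hN).trans finSumFinEquiv.symm) i =
        if h : i.1 < m then Sum.inl ⟨i.1, h⟩
        else Sum.inr ⟨i.1 - m, by have := i.2; omega⟩ := by
    intro i
    by_cases h : i.1 < m
    · rw [dif_pos h]
      simp only [Equiv.trans_apply, Equiv.symm_apply_eq, finSumFinEquiv_apply_left]
      exact Fin.ext (by simp)
    · rw [dif_neg h]
      simp only [Equiv.trans_apply, Equiv.symm_apply_eq, finSumFinEquiv_apply_right]
      apply Fin.ext
      show i.1 = m + (i.1 - m)
      omega
  have hMM : MM hm0 hm A ι =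
      (Matrix.fromBlocks 1 0 0 (WW hm0 hm A ι)).submatrix
        ((finCongr hN).trans finSumFinEquiv.symm) ((finCongr hN).trans finSumFinEquiv.symm) := by
    funext i j
    rw [Matrix.submatrix_apply, he i, he j]
    by_cases hi : i.1 < m <;> by_cases hj : j.1 < m
    · rw [dif_pos hi, dif_pos hj]
      simp only [Matrix.fromBlocks_apply₁₁, MM]
      rw [dif_pos hj]
      simp [Matrix.one_apply, Fin.ext_iff]
    · rw [dif_pos hi, dif_neg hj]
      simp only [Matrix.fromBlocks_apply₁₂, MM, Matrix.zero_apply]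
      rw [dif_neg hj, dif_pos hi]
    · rw [dif_neg hi, dif_pos hj]
      simp only [Matrix.fromBlocks_apply₂₁, MM, Matrix.zero_apply]
      rw [dif_pos hj, if_neg (by omega)]
    · rw [dif_neg hi, dif_neg hj]
      simp only [Matrix.fromBlocks_apply₂₂, MM, WW]
      by_cases hj2 : j.1 < q * m
      · rw [dif_neg hj, dif_neg hi, dif_pos hj2,
          dif_pos (show j.1 - m < (q - 1) * m by omega)]
        have hj' : j.1 = (j.1 - m) + m := by omega
        have hd : j.1 / m = (j.1 - m) / m + 1 := by
          conv_lhs => rw [hj', Nat.add_div_right _ hm0]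
        have hmod : j.1 % m = (j.1 - m) % m := by
          conv_lhs => rw [hj', Nat.add_mod_right]
        rw [hd]
        exact congrArg _ (Fin.ext hmod)
      · rw [dif_neg hj, dif_neg hi, dif_neg hj2,
          dif_neg (show ¬ (j.1 - m < (q - 1) * m) by omega)]
        exact congrArg _ (congrArg _ (Fin.ext
          (show j.1 - q * m = j.1 - m - (q - 1) * m by omega)))
  rw [hMM, Matrix.det_submatrix_equiv_self, Matrix.det_fromBlocks_zero₂₁, Matrix.det_one, one_mul]

end

section
variable {m q r : ℕ}

lemma WW_eq (hq : 1 ≤ q) (hr0 : 0 < r) (hrm : r ≤ m) (hm0 : 0 < m) (hm : m ≤ q * m + r)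
    (A : Matrix (Fin (q * m + r)) (Fin (q * m + r)) ℂ) (ι : Fin r → Fin m) :
    WW hm0 hm A ι = VV hm0 hm A ι * U2 hm0 hm A ι := by
  have h1 : (q - 1) * m = q * m - m := by rw [Nat.sub_mul, one_mul]
  have hmq : m ≤ q * m := Nat.le_mul_of_pos_left m hq
  have h2m : (q - 1) * m ≤ q * m + r - m := by omega
  funext i j
  rw [Matrix.mul_apply, Stmt15Aux.sum_split h2m, Stmt15Aux.sum_blocks]
  have hval : ∀ (t : Fin (q - 1)) (p : Fin m),
      ((finProdFinEquiv (t, p) : Fin ((q - 1) * m)) : ℕ) = p.1 + m * t.1 := fun t p => rfl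
  have hlt : ∀ (t : Fin (q - 1)) (p : Fin m),
      ((finProdFinEquiv (t, p) : Fin ((q - 1) * m)) : ℕ) < (q - 1) * m := fun t p =>
    (finProdFinEquiv (t, p) : Fin ((q - 1) * m)).2
  have hdv : ∀ (t : Fin (q - 1)) (p : Fin m),
      ((finProdFinEquiv (t, p) : Fin ((q - 1) * m)) : ℕ) / m = t.1 := fun t p => by
    rw [hval, Nat.add_mul_div_left _ _ hm0, Nat.div_eq_of_lt p.2, Nat.zero_add]
  have hmv : ∀ (t : Fin (q - 1)) (p : Fin m),
      ((finProdFinEquiv (t, p) : Fin ((q - 1) * m)) : ℕ) % m = p.1 := fun t p => by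
    rw [hval, Nat.add_mul_mod_self_left, Nat.mod_eq_of_lt p.2]
  by_cases hj : j.1 < (q - 1) * m
  · -- columns in one of the first q-1 blocks
    have hs : j.1 / m < q - 1 := (Nat.div_lt_iff_lt_mul hm0).mpr hj
    have hA1 : (∑ t : Fin (q - 1), ∑ p : Fin m,
        VV hm0 hm A ι i ⟨((finProdFinEquiv (t, p) : Fin ((q - 1) * m)) : ℕ), by
            have := hlt t p; omega⟩ *
          U2 hm0 hm A ι ⟨((finProdFinEquiv (t, p) : Fin ((q - 1) * m)) : ℕ), by
            have := hlt t p; omega⟩ j)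
        = ∑ t : Fin (q - 1), (if t.1 ≤ j.1 / m then
            ((lowRight hm A) ^ t.1 * lowLeft hm A * XX hm A (j.1 / m - t.1)) i
              ⟨j.1 % m, Nat.mod_lt _ hm0⟩ else 0) := by
      apply Finset.sum_congr rfl
      intro t _
      by_cases hts : t.1 ≤ j.1 / m
      · rw [if_pos hts, Matrix.mul_apply]
        apply Finset.sum_congr rfl
        intro p _
        have e1 : VV hm0 hm A ι i ⟨((finProdFinEquiv (t, p) : Fin ((q - 1) * m)) : ℕ), by
            have := hlt t p; omega⟩ =
            ((lowRight hm A) ^ t.1 * lowLeft hm A) i p := by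
          simp only [VV]
          rw [dif_pos (hlt t p), hdv t p]
          exact congrArg _ (Fin.ext (hmv t p))
        have e2 : U2 hm0 hm A ι ⟨((finProdFinEquiv (t, p) : Fin ((q - 1) * m)) : ℕ), by
            have := hlt t p; omega⟩ j =
            XX hm A (j.1 / m - t.1) p ⟨j.1 % m, Nat.mod_lt _ hm0⟩ := by
          simp only [U2]
          rw [dif_pos hj, dif_pos (show ((finProdFinEquiv (t, p) :
              Fin ((q - 1) * m)) : ℕ) / m ≤ j.1 / m by rw [hdv t p]; exact hts), hdv t p]
          exact congrFun (congrArg _ (Fin.ext (hmv t p))) _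
        rw [e1, e2]
      · rw [if_neg hts]
        apply Finset.sum_eq_zero
        intro p _
        have e2 : U2 hm0 hm A ι ⟨((finProdFinEquiv (t, p) : Fin ((q - 1) * m)) : ℕ), by
            have := hlt t p; omega⟩ j = 0 := by
          simp only [U2]
          rw [dif_pos hj, dif_neg (show ¬ ((finProdFinEquiv (t, p) :
              Fin ((q - 1) * m)) : ℕ) / m ≤ j.1 / m by rw [hdv t p]; exact hts)]
        rw [e2, mul_zero]
    have hA2 : (∑ p : Fin (q * m + r - m - (q - 1) * m),
        VV hm0 hm A ι i ⟨(q - 1) * m + p.1, by have := p.2; omega⟩ *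
          U2 hm0 hm A ι ⟨(q - 1) * m + p.1, by have := p.2; omega⟩ j) = 0 := by
      apply Finset.sum_eq_zero
      intro p _
      have hp : p.1 < m := by have := p.2; omega
      have hdd : ((q - 1) * m + p.1) / m = q - 1 := by
        have e : (q - 1) * m + p.1 = p.1 + m * (q - 1) := by ring
        rw [e, Nat.add_mul_div_left _ _ hm0, Nat.div_eq_of_lt hp, Nat.zero_add]
      have e2 : U2 hm0 hm A ι ⟨(q - 1) * m + p.1, by have := p.2; omega⟩ j = 0 := by
        simp only [U2]
        rw [dif_pos hj, dif_neg (show ¬ ((q - 1) * m + p.1) / m ≤ j.1 / m by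
          rw [hdd]; omega)]
      rw [e2, mul_zero]
    rw [hA1, hA2, add_zero,
      Fin.sum_univ_eq_sum_range (fun t' => if t' ≤ j.1 / m then
        ((lowRight hm A) ^ t' * lowLeft hm A * XX hm A (j.1 / m - t')) i
          ⟨j.1 % m, Nat.mod_lt _ hm0⟩ else 0) (q - 1)]
    rw [show WW hm0 hm A ι i j = YY hm A (j.1 / m + 1) i ⟨j.1 % m, Nat.mod_lt _ hm0⟩ from by
      simp only [WW]; rw [dif_pos hj]]
    rw [YY_formula, Matrix.sum_apply]
    refine Eq.trans (Finset.sum_congr rfl fun x hx => ?_)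
      (Finset.sum_subset (Finset.range_subset_range.mpr (show j.1 / m + 1 ≤ q - 1 by omega))
        (fun x hx hnx => ?_))
    · rw [if_pos (by simp only [Finset.mem_range] at hx; omega)]
    · rw [if_neg (by simp only [Finset.mem_range] at hx hnx; omega)]
  · -- column in the last (partial) block
    have hcb : j.1 - (q - 1) * m < r := by have := j.2; omega
    have hB1 : (∑ t : Fin (q - 1), ∑ p : Fin m,
        VV hm0 hm A ι i ⟨((finProdFinEquiv (t, p) : Fin ((q - 1) * m)) : ℕ), by
            have := hlt t p; omega⟩ *
          U2 hm0 hm A ι ⟨((finProdFinEquiv (t, p) : Fin ((q - 1) * m)) : ℕ), by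
            have := hlt t p; omega⟩ j)
        = ∑ t : Fin (q - 1),
            ((lowRight hm A) ^ t.1 * lowLeft hm A * XX hm A (q - 1 - t.1)) i
              (ι ⟨j.1 - (q - 1) * m, hcb⟩) := by
      apply Finset.sum_congr rfl
      intro t _
      rw [Matrix.mul_apply]
      apply Finset.sum_congr rfl
      intro p _
      have e1 : VV hm0 hm A ι i ⟨((finProdFinEquiv (t, p) : Fin ((q - 1) * m)) : ℕ), by
          have := hlt t p; omega⟩ =
          ((lowRight hm A) ^ t.1 * lowLeft hm A) i p := by
        simp only [VV]
        rw [dif_pos (hlt t p), hdv t p]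
        exact congrArg _ (Fin.ext (hmv t p))
      have e2 : U2 hm0 hm A ι ⟨((finProdFinEquiv (t, p) : Fin ((q - 1) * m)) : ℕ), by
          have := hlt t p; omega⟩ j =
          XX hm A (q - 1 - t.1) p (ι ⟨j.1 - (q - 1) * m, hcb⟩) := by
        simp only [U2]
        rw [dif_neg hj, dif_pos (hlt t p), hdv t p]
        exact congrFun (congrArg _ (Fin.ext (hmv t p))) _
      rw [e1, e2]
    have hB2 : (∑ p : Fin (q * m + r - m - (q - 1) * m),
        VV hm0 hm A ι i ⟨(q - 1) * m + p.1, by have := p.2; omega⟩ *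
          U2 hm0 hm A ι ⟨(q - 1) * m + p.1, by have := p.2; omega⟩ j) =
        VV hm0 hm A ι i j := by
      rw [Finset.sum_eq_single (⟨j.1 - (q - 1) * m, by have := j.2; omega⟩ :
          Fin (q * m + r - m - (q - 1) * m))]
      · have hee : (⟨(q - 1) * m + (j.1 - (q - 1) * m), by have := j.2; omega⟩ :
            Fin (q * m + r - m)) = j := Fin.ext (show (q - 1) * m + (j.1 - (q - 1) * m) = j.1
              by omega)
        rw [hee]
        have hU2 : U2 hm0 hm A ι j j = 1 := by
          simp only [U2]
          rw [dif_neg hj, dif_neg hj]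
          simp
        rw [hU2, mul_one]
      · intro p _ hp
        have hU2 : U2 hm0 hm A ι ⟨(q - 1) * m + p.1, by have := p.2; omega⟩ j = 0 := by
          simp only [U2]
          rw [dif_neg hj, dif_neg (show ¬ ((q - 1) * m + p.1 < (q - 1) * m) by omega),
            if_neg]
          intro h
          have hval2 : (q - 1) * m + p.1 = j.1 := congrArg Fin.val h
          exact hp (Fin.ext (show p.1 = j.1 - (q - 1) * m by omega))
        rw [hU2, mul_zero]
      · intro h
        exact absurd (Finset.mem_univ _) h
    rw [hB1, hB2]
    rw [show WW hm0 hm A ι i j = YY hm A q i (ι ⟨j.1 - (q - 1) * m, hcb⟩) from by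
      simp only [WW]; rw [dif_neg hj]]
    rw [show VV hm0 hm A ι i j =
        ((lowRight hm A) ^ (q - 1) * lowLeft hm A) i (ι ⟨j.1 - (q - 1) * m, hcb⟩) from by
      simp only [VV]; rw [dif_neg hj]]
    have hYq := YY_formula hm A (q - 1)
    rw [show q - 1 + 1 = q from by omega] at hYq
    rw [hYq, Matrix.sum_apply,
      Fin.sum_univ_eq_sum_range (fun t' =>
        ((lowRight hm A) ^ t' * lowLeft hm A * XX hm A (q - 1 - t')) i
          (ι ⟨j.1 - (q - 1) * m, hcb⟩)) (q - 1),
      show ((lowRight hm A) ^ (q - 1) * lowLeft hm A) i (ι ⟨j.1 - (q - 1) * m, hcb⟩)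
          = ((lowRight hm A) ^ (q - 1) * lowLeft hm A * XX hm A (q - 1 - (q - 1))) i
            (ι ⟨j.1 - (q - 1) * m, hcb⟩) from by
        rw [Nat.sub_self, XX_zero, Matrix.mul_one],
      ← Finset.sum_range_succ, show q - 1 + 1 = q from by omega]

end

section
variable {m q r : ℕ}

lemma VV_eq (hm0 : 0 < m) (hm : m ≤ q * m + r)
    (A : Matrix (Fin (q * m + r)) (Fin (q * m + r)) ℂ) (ι : Fin r → Fin m)
    (e : q * m + r - m = (q - 1) * m + r) :
    VV hm0 hm A ι = (hcat2 ((q - 1) * m) r (q * m + r - m)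
        (hcat (q - 1) m (q * m + r - m) (fun s => (lowRight hm A) ^ (s : ℕ) * lowLeft hm A))
        ((lowRight hm A) ^ (q - 1) * (lowLeft hm A).submatrix id ι)).submatrix id
      (finCongr e) := by
  funext i j
  rw [Matrix.submatrix_apply]
  simp only [id_eq, finCongr_apply, Fin.coe_cast]
  by_cases hj : j.1 < (q - 1) * m
  · simp only [VV, hcat2, hcat, Fin.coe_cast]
    rw [dif_pos hj, dif_pos hj]
  · simp only [VV, hcat2, Fin.coe_cast]
    rw [dif_neg hj, dif_neg hj, mul_sub_apply]

end

theorem stmt_15 (m q r : ℕ) (hq : 1 ≤ q) (hr0 : 0 < r) (hrm : r ≤ m)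
    (hmn : m ≤ q * m + r)
    (A : Matrix (Fin (q * m + r)) (Fin (q * m + r)) ℂ)
    (ι : Fin r → Fin m) (hι : StrictMono ι) :
    (hcat2 (q * m) r (q * m + r)
        (hcat q m (q * m + r) (fun s => A ^ (s : ℕ) * Em ℂ (q * m + r) m))
        ((A ^ q * Em ℂ (q * m + r) m).submatrix id ι)).det =
      ((hcat2 ((q - 1) * m) r (q * m + r - m)
          (hcat (q - 1) m (q * m + r - m)
            (fun s => (lowRight hmn A) ^ (s : ℕ) * lowLeft hmn A))
          ((lowRight hmn A) ^ (q - 1) * (lowLeft hmn A).submatrix id ι)).submatrix id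
        (finCongr (by
          rw [Nat.sub_mul, one_mul, Nat.sub_add_comm (Nat.le_mul_of_pos_left m (by omega))]))).det := by
  have hm0 : 0 < m := lt_of_lt_of_le hr0 hrm
  rw [big_eq hq hr0 hrm hmn hm0 A ι, Matrix.det_mul, det_UU hq hm0 hmn A ι, mul_one,
    MM_det hq hm0 hmn A ι, WW_eq hq hr0 hrm hm0 hmn A ι, Matrix.det_mul,
    det_U2 hq hm0 hmn A ι, mul_one, VV_eq hm0 hmn A ι]
end
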